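/- arXiv:math/0412132 — 3 statements merged into one kernel-verified Lean document; each statement's English description precedes it below -/
import Mathlib

section
/- Let K : ℝ → Matrix (Fin n) (Fin n) ℝ be a continuous family of skew-symmetric matrices, and let R : ℝ → Matrix (Fin n) (Fin n) ℝ solve the linear ODE R'(s) = - R(s) * K(s). If R(s₀) is an orthogonal matrix for some s₀, then R(s) is orthogonal for every s ∈ ℝ, i.e. R(s) * (R(s))ᵀ = 1 for all s. -/
/-!
Differentiating `R Rᵀ` along the flow gives `-R K Rᵀ - R Kᵀ Rᵀ`, which vanishes because `K` is
skew-symmetric. Hence `R Rᵀ` is constant, and it equals `1` at `s₀`.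
-/

open Matrix

namespace Matrix

variable {m n p : Type*} [Fintype n]

theorem hasDerivAt_mul_apply {A : ℝ → Matrix m n ℝ} {B : ℝ → Matrix n p ℝ}
    {A' : Matrix m n ℝ} {B' : Matrix n p ℝ} {s : ℝ}
    (hA : ∀ i j, HasDerivAt (fun t => A t i j) (A' i j) s)
    (hB : ∀ j k, HasDerivAt (fun t => B t j k) (B' j k) s) (i : m) (k : p) :
    HasDerivAt (fun t => (A t * B t) i k) ((A' * B s + A s * B') i k) s := by
  simp only [mul_apply, add_apply, ← Finset.sum_add_distrib]
  exact HasDerivAt.fun_sum fun j _ => (hA i j).mul (hB j k)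

theorem eq_of_hasDerivAt_apply_zero {M : ℝ → Matrix m p ℝ}
    (hM : ∀ t i k, HasDerivAt (fun u => M u i k) 0 t) (s t : ℝ) : M s = M t := by
  ext i k
  exact is_const_of_deriv_eq_zero (fun u => (hM u i k).differentiableAt)
    (fun u => (hM u i k).deriv) s t

theorem neg_mul_mul_transpose_add_mul_transpose_neg_mul_eq_zero {R : Matrix m n ℝ}
    {K : Matrix n n ℝ} (hK : Kᵀ = -K) : -(R * K) * Rᵀ + R * (-(R * K))ᵀ = 0 := by
  rw [transpose_neg, transpose_mul, hK]
  simp only [Matrix.neg_mul, neg_neg, Matrix.mul_assoc, neg_add_cancel]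

end Matrix

theorem stmt_0_general (n : ℕ) (K R : ℝ → Matrix (Fin n) (Fin n) ℝ)
    (hKskew : ∀ s, (K s)ᵀ = -(K s))
    (hR : ∀ s i j, HasDerivAt (fun t => R t i j) ((-(R s * K s)) i j) s)
    (s₀ : ℝ) (hR0 : R s₀ * (R s₀)ᵀ = 1) :
    ∀ s, R s * (R s)ᵀ = 1 := by
  have hconst : ∀ t i j, HasDerivAt (fun u => (R u * (R u)ᵀ) i j) 0 t := by
    intro t i j
    simpa only [neg_mul_mul_transpose_add_mul_transpose_neg_mul_eq_zero (hKskew t),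
      Matrix.zero_apply] using
      hasDerivAt_mul_apply (B := fun u => (R u)ᵀ) (B' := (-(R t * K t))ᵀ) (hR t)
        (fun j k => hR t k j) i j
  intro s
  rw [eq_of_hasDerivAt_apply_zero hconst s s₀, hR0]

/-- If `K` is a continuous family of skew-symmetric matrices and `R` solves the
linear ODE `R' = -R * K` with `R s₀` orthogonal at some `s₀`, then `R s` is
orthogonal for every `s`. -/
theorem stmt_0 (n : ℕ) (K R : ℝ → Matrix (Fin n) (Fin n) ℝ)
    (hKcont : ∀ i j, Continuous fun s => K s i j)
    (hKskew : ∀ s, (K s)ᵀ = -(K s))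
    (hR : ∀ s i j, HasDerivAt (fun t => R t i j) ((-(R s * K s)) i j) s)
    (s₀ : ℝ) (hR0 : R s₀ * (R s₀)ᵀ = 1) :
    ∀ s, R s * (R s)ᵀ = 1 :=
  stmt_0_general n K R hKskew hR s₀ hR0
end

section
/- Let K : ℝ → Matrix (Fin n) (Fin n) ℝ be a continuous family of matrices with trace zero, and let R : ℝ → Matrix (Fin n) (Fin n) ℝ solve R'(s) = - R(s) * K(s) with det(R(s₀)) = 1 for some s₀. Then det(R(s)) = 1 for all s ∈ ℝ. -/
open Matrix

/-! Along a solution of `R' = R * B`, Jacobi's formula differentiates `det R` column by column;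
the `j`-th column of `R * B` is a combination of the columns of `R` whose `j`-th coefficient is
`B j j`, so `(det R)' = tr B * det R` (Liouville's formula). For `B = -K` traceless the derivative
vanishes identically, so `det R` is constant. -/

namespace Matrix

variable {ι : Type*} [Fintype ι] [DecidableEq ι]

theorem sum_det_updateCol_mul {R : Type*} [CommRing R] (A B : Matrix ι ι R) :
    ∑ j, (A.updateCol j fun i => (A * B) i j).det = B.trace * A.det := by
  have hcol (j : ι) : (fun i => (A * B) i j) = fun i => ∑ k, B k j • A i k := by
    funext i
    simp only [mul_apply, smul_eq_mul, mul_comm]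
  simp_rw [hcol, det_updateCol_sum, smul_eq_mul, ← Finset.sum_mul]
  rfl

variable {𝕜 : Type*} [NontriviallyNormedField 𝕜]

theorem hasDerivAt_det {A : 𝕜 → Matrix ι ι 𝕜} {A' : Matrix ι ι 𝕜} {s : 𝕜}
    (h : ∀ i j, HasDerivAt (fun t => A t i j) (A' i j) s) :
    HasDerivAt (fun t => (A t).det) (∑ j, ((A s).updateCol j fun i => A' i j).det) s := by
  have hleibniz : (fun t => (A t).det) =
      fun t => ∑ σ : Equiv.Perm ι, (Equiv.Perm.sign σ : 𝕜) * ∏ i, A t (σ i) i :=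
    funext fun t => det_apply' (A t)
  rw [hleibniz]
  refine (HasDerivAt.fun_sum fun σ _ =>
    (HasDerivAt.fun_finsetProd fun i _ => h (σ i) i).const_mul _).congr_deriv ?_
  simp_rw [Finset.mul_sum, det_apply']
  rw [Finset.sum_comm]
  refine Finset.sum_congr rfl fun j _ => Finset.sum_congr rfl fun σ _ => ?_
  rw [smul_eq_mul, mul_comm _ (A' _ _), ← Finset.mul_prod_erase _ _ (Finset.mem_univ j),
    updateCol_self]
  congr 2
  exact Finset.prod_congr rfl fun k hk => (updateCol_ne (Finset.ne_of_mem_erase hk)).symm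

theorem hasDerivAt_det_of_hasDerivAt_eq_mul {A : 𝕜 → Matrix ι ι 𝕜} {B : Matrix ι ι 𝕜} {s : 𝕜}
    (h : ∀ i j, HasDerivAt (fun t => A t i j) ((A s * B) i j) s) :
    HasDerivAt (fun t => (A t).det) (B.trace * (A s).det) s :=
  sum_det_updateCol_mul (A s) B ▸ hasDerivAt_det h

end Matrix

theorem stmt_1_general (n : ℕ) (K R : ℝ → Matrix (Fin n) (Fin n) ℝ)
    (hKtr : ∀ s, (K s).trace = 0)
    (hR : ∀ s i j, HasDerivAt (fun t => R t i j) ((-(R s * K s)) i j) s)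
    (s₀ : ℝ) (hR0 : (R s₀).det = 1) :
    ∀ s, (R s).det = 1 := by
  have hdet (s : ℝ) : HasDerivAt (fun t => (R t).det) 0 s := by
    have h := hasDerivAt_det_of_hasDerivAt_eq_mul (B := -K s) fun i j => by
      simpa only [mul_neg] using hR s i j
    rwa [trace_neg, hKtr, neg_zero, zero_mul] at h
  intro s
  rw [← hR0]
  exact is_const_of_deriv_eq_zero (fun t => (hdet t).differentiableAt) (fun t => (hdet t).deriv)
    s s₀

/-- Liouville's formula application: if `K` is a continuous family of traceless
matrices and `R` solves `R' = -R * K` with `det (R s₀) = 1`, then `det (R s) = 1`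
for all `s`. -/
theorem stmt_1 (n : ℕ) (K R : ℝ → Matrix (Fin n) (Fin n) ℝ)
    (hKcont : ∀ i j, Continuous fun s => K s i j)
    (hKtr : ∀ s, (K s).trace = 0)
    (hR : ∀ s i j, HasDerivAt (fun t => R t i j) ((-(R s * K s)) i j) s)
    (s₀ : ℝ) (hR0 : (R s₀).det = 1) :
    ∀ s, (R s).det = 1 :=
  stmt_1_general n K R hKtr hR s₀ hR0
end

section
/- Let e : ℝ → Fin d → ℝ^d be a C¹ orthonormal frame satisfying e_i' = ∑_j K_{ij} e_j with K skew-symmetric, and let R : ℝ → Matrix (Fin d) (Fin d) ℝ be differentiable with R' = -R·K and R(s) orthogonal. Define ẽ_i := ∑_j R_{ij} e_j. Then (ẽ_i(s)) is an orthonormal frame for every s, and if additionally the first row of R is (1,0,…,0) (so ẽ₁ = e₁ and K has the Frenet form with first row (0, κ₁, 0, …, 0)), then ẽ₁' = κ₁ e₂ and ẽ_μ' = -κ₁ R_{μ2} e₁ for μ ≥ 2. -/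
/-!
Orthonormality of `ẽ` is `R Rᵀ = 1` read in the orthonormal frame `e`. Differentiating
`ẽ_μ = ∑ⱼ R_{μj} eⱼ` along the frame gives the coefficients `R' + R K`. For `μ ≠ 1` the transport
equation makes them vanish off the first column, where `R'` vanishes because the first column of
`R` is constant; the surviving entry is `(R K)_{μ1} = -κ₁ R_{μ2}` by skew-symmetry of `K`.
-/

open Matrix

section FrameTransformation

variable {ι E : Type*} [Fintype ι] [NormedAddCommGroup E] [InnerProductSpace ℝ E]

theorem Orthonormal.sum_smul_of_mem_orthogonalGroup [DecidableEq ι] {v : ι → E}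
    (hv : Orthonormal ℝ v) {R : Matrix ι ι ℝ} (hR : R ∈ orthogonalGroup ι ℝ) :
    Orthonormal ℝ fun i => ∑ k, R i k • v k := by
  rw [orthonormal_iff_ite]
  intro i j
  have hRRt : (R * Rᵀ) i j = (1 : Matrix ι ι ℝ) i j := by rw [(mem_orthogonalGroup_iff ι ℝ).mp hR]
  simpa [hv.inner_sum, mul_apply, one_apply] using hRRt

theorem hasDerivAt_sum_smul_of_hasDerivAt_frame {c : ℝ → ι → ℝ} {c' : ι → ℝ}
    {e : ℝ → ι → E} {K : Matrix ι ι ℝ} {s : ℝ}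
    (hc : ∀ j, HasDerivAt (fun t => c t j) (c' j) s)
    (he : ∀ j, HasDerivAt (fun t => e t j) (∑ k, K j k • e s k) s) :
    HasDerivAt (fun t => ∑ j, c t j • e t j) (∑ k, (c' k + (c s ᵥ* K) k) • e s k) s := by
  refine (HasDerivAt.fun_sum (u := Finset.univ) fun j _ => (hc j).smul (he j)).congr_deriv ?_
  simp only [add_smul, Finset.sum_add_distrib, vecMul, dotProduct, Finset.sum_smul,
    Finset.smul_sum, smul_smul]
  rw [add_comm, Finset.sum_comm]

end FrameTransformation

theorem mul_apply_of_transpose_eq_neg_of_row {ι : Type*} [Fintype ι] [DecidableEq ι]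
    {A K : Matrix ι ι ℝ} (hK : Kᵀ = -K) {i₀ i₁ : ι} {κ : ℝ}
    (hrow : ∀ j, K i₀ j = if j = i₁ then κ else 0) (μ : ι) :
    (A * K) μ i₀ = -(κ * A μ i₁) := by
  have hcol : ∀ j, K j i₀ = -K i₀ j := fun j => by
    rw [← transpose_apply K i₀ j, hK, neg_apply]
  simp [mul_apply, hcol, hrow, mul_comm]

theorem stmt_15_general (d : ℕ)
    (i0 i1 : Fin d)
    (e : ℝ → Fin d → EuclideanSpace ℝ (Fin d))
    (K : ℝ → Matrix (Fin d) (Fin d) ℝ) (κ₁ : ℝ → ℝ)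
    (R : ℝ → Matrix (Fin d) (Fin d) ℝ)
    (horth : ∀ s i j, (inner ℝ (e s i) (e s j) : ℝ) = if i = j then 1 else 0)
    (he : ∀ s i, HasDerivAt (fun t => e t i) (∑ j, K s i j • e s j) s)
    (hKskew : ∀ s, (K s)ᵀ = -(K s))
    (hRorth : ∀ s, R s ∈ Matrix.orthogonalGroup (Fin d) ℝ)
    (hRrow : ∀ s j, R s i0 j = if j = i0 then 1 else 0)
    (hRcol : ∀ s j, R s j i0 = if j = i0 then 1 else 0)
    (hRode : ∀ s, ∀ μ ν : Fin d, μ ≠ i0 → ν ≠ i0 →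
      HasDerivAt (fun t => R t μ ν) (-∑ ρ, R s μ ρ * K s ρ ν) s)
    (hKrow : ∀ s j, K s i0 j = if j = i1 then κ₁ s else 0) :
    (∀ s i j,
      (inner ℝ (∑ k, R s i k • e s k) (∑ k, R s j k • e s k) : ℝ) =
        if i = j then 1 else 0) ∧
    (∀ s, HasDerivAt (fun t => ∑ j, R t i0 j • e t j) (κ₁ s • e s i1) s) ∧
    (∀ s, ∀ μ : Fin d, μ ≠ i0 →
      HasDerivAt (fun t => ∑ j, R t μ j • e t j)
        ((-(κ₁ s * R s μ i1)) • e s i0) s) := by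
  refine ⟨fun s => orthonormal_iff_ite.mp
    ((orthonormal_iff_ite.mpr (horth s)).sum_smul_of_mem_orthogonalGroup (hRorth s)), ?_, ?_⟩
  · intro s
    have hfirst : (fun t => ∑ j, R t i0 j • e t j) = fun t => e t i0 := by
      funext t
      simp [hRrow, ite_smul]
    simpa [hfirst, hKrow, ite_smul] using he s i0
  · intro s μ hμ
    have hc : ∀ ν, HasDerivAt (fun t => R t μ ν)
        (if ν = i0 then 0 else -(R s * K s) μ ν) s := by
      intro ν
      split_ifs with hν
      · subst hν
        simpa [hRcol, hμ] using hasDerivAt_const s (0 : ℝ)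
      · simpa [mul_apply] using hRode s μ ν hμ hν
    refine (hasDerivAt_sum_smul_of_hasDerivAt_frame hc (he s)).congr_deriv ?_
    have hcoeff : ∀ k, (if k = i0 then 0 else -(R s * K s) μ k) + (R s μ ᵥ* K s) k =
        if k = i0 then (R s * K s) μ i0 else 0 := by
      intro k
      rw [show (R s μ ᵥ* K s) k = (R s * K s) μ k from rfl]
      split_ifs with hk <;> simp [hk]
    simp [hcoeff, ite_smul, mul_apply_of_transpose_eq_neg_of_row (hKskew s) (hKrow s)]

/-- The Tang frame. Let `e` be a `C¹` orthonormal frame with `e_i' = ∑_j K_{ij} e_j`,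
`K` skew-symmetric, and let `R` be block diagonal (first row and column `(1,0,…,0)`),
orthogonal, whose lower block solves `R' = -R K` against the lower block of `K`.
Then `ẽ_i := ∑_j R_{ij} e_j` is an orthonormal frame; and if the first row of `K`
is `(0, κ₁, 0, …, 0)` then `ẽ₁' = κ₁ e₂` and `ẽ_μ' = -κ₁ R_{μ2} e₁` for `μ ≥ 2`. -/
theorem stmt_15 (d : ℕ) (hd : 2 ≤ d)
    (i0 i1 : Fin d) (hi0 : (i0 : ℕ) = 0) (hi1 : (i1 : ℕ) = 1)
    (e : ℝ → Fin d → EuclideanSpace ℝ (Fin d))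
    (K : ℝ → Matrix (Fin d) (Fin d) ℝ) (κ₁ : ℝ → ℝ)
    (R : ℝ → Matrix (Fin d) (Fin d) ℝ)
    (horth : ∀ s i j, (inner ℝ (e s i) (e s j) : ℝ) = if i = j then 1 else 0)
    (he : ∀ s i, HasDerivAt (fun t => e t i) (∑ j, K s i j • e s j) s)
    (hKskew : ∀ s, (K s)ᵀ = -(K s))
    (hKcont : ∀ i j, Continuous fun s => K s i j)
    (hRorth : ∀ s, R s ∈ Matrix.orthogonalGroup (Fin d) ℝ)
    (hRrow : ∀ s j, R s i0 j = if j = i0 then 1 else 0)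
    (hRcol : ∀ s j, R s j i0 = if j = i0 then 1 else 0)
    (hRode : ∀ s, ∀ μ ν : Fin d, μ ≠ i0 → ν ≠ i0 →
      HasDerivAt (fun t => R t μ ν) (-∑ ρ, R s μ ρ * K s ρ ν) s)
    (hKrow : ∀ s j, K s i0 j = if j = i1 then κ₁ s else 0) :
    (∀ s i j,
      (inner ℝ (∑ k, R s i k • e s k) (∑ k, R s j k • e s k) : ℝ) =
        if i = j then 1 else 0) ∧
    (∀ s, HasDerivAt (fun t => ∑ j, R t i0 j • e t j) (κ₁ s • e s i1) s) ∧
    (∀ s, ∀ μ : Fin d, μ ≠ i0 →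
      HasDerivAt (fun t => ∑ j, R t μ j • e t j)
        ((-(κ₁ s * R s μ i1)) • e s i0) s) :=
  stmt_15_general d i0 i1 e K κ₁ R horth he hKskew hRorth hRrow hRcol hRode hKrow
end
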